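/- arXiv:2510.17061 — 6 statements merged into one kernel-verified Lean document; each statement's English description precedes it below -/
import Mathlib

section
/- For a regular language L, the cone B(L) of bounded weight functions, viewed as a subset of ℝ^S via φ ↦ (φ(s))_{s∈S}, is a rational polyhedral cone: it is the intersection of finitely many closed half-spaces of the form {x ∈ ℝ^S : ∑_s a_s x_s ≤ 0} with a_s ∈ ℤ_{≥0}. -/
/-- Count of a letter in `k` copies of `b` concatenated. -/
lemma count_flatten_replicate {S : Type*} [DecidableEq S] (b : List S) (k : ℕ) (s : S) :
    (List.replicate k b).flatten.count s = k * b.count s := by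
  induction k with
  | zero => simp
  | succ k ih => simp [List.replicate_succ, List.count_append, ih, Nat.succ_mul, Nat.add_comm]

lemma le_zero_of_forall_nsmul_le {x C : ℝ} (h : ∀ k : ℕ, (k : ℝ) * x ≤ C) : x ≤ 0 := by
  by_contra hx
  push_neg at hx
  obtain ⟨k, hk⟩ := exists_nat_gt (C / x)
  have := h k
  have : (k : ℝ) ≤ C / x := (le_div_iff₀ hx).2 this
  linarith

/-- For a regular language `L` over a finite alphabet `S`, the cone `B(L)` of bounded weight
functions, viewed as a subset of `ℝ^S` via `φ ↦ (φ s)_{s ∈ S}` (so that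
`φ w = ∑ s, |w_s| * φ s`), is a rational polyhedral cone: it is the intersection of finitely
many closed half-spaces `{x ∈ ℝ^S : ∑ s, a_s x_s ≤ 0}` with coefficients `a_s ∈ ℤ_{≥0}`. -/
theorem boundedCone_rational_polyhedral {S : Type*} [Fintype S] [DecidableEq S]
    (L : Language S) (hL : L.IsRegular) :
    ∃ A : Finset (S → ℕ),
      {c : S → ℝ | ∃ N > (0 : ℝ), ∀ w ∈ L, (∑ s : S, (w.count s : ℝ) * c s) ≤ N} =
        ⋂ a ∈ A, {c : S → ℝ | (∑ s : S, (a s : ℝ) * c s) ≤ 0} := by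
  classical
  obtain ⟨σ, _, M, hM⟩ := hL
  set n := Fintype.card σ with hn
  -- the set of Parikh vectors of "pumpable" words of length ≤ n
  set P : Set (S → ℕ) := {v | ∃ b : List S, (fun s => b.count s) = v ∧ b ≠ [] ∧
      b.length ≤ n ∧ ∃ a cc : List S,
        ∀ k : ℕ, a ++ (List.replicate k b).flatten ++ cc ∈ L} with hP
  have hPfin : P.Finite := by
    have : P ⊆ (fun b : List S => fun s => b.count s) '' {b : List S | b.length ≤ n} := by
      rintro v ⟨b, rfl, _, hb, _⟩
      exact ⟨b, hb, rfl⟩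
    exact ((List.finite_length_le S n).image _).subset this
  refine ⟨hPfin.toFinset, ?_⟩
  ext c
  simp only [Set.mem_setOf_eq, Set.mem_iInter, Set.Finite.mem_toFinset]
  constructor
  · rintro ⟨N, hN0, hN⟩ v hv
    obtain ⟨b, rfl, hbne, hble, a, cc, hk⟩ := hv
    have key : ∀ k : ℕ, (k : ℝ) * (∑ s : S, (b.count s : ℝ) * c s) ≤
        N - ∑ s : S, ((a.count s : ℝ) + (cc.count s : ℝ)) * c s := by
      intro k
      have h1 := hN _ (hk k)
      have hcount : ∀ s : S, ((a ++ (List.replicate k b).flatten ++ cc).count s : ℝ)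
          = (a.count s : ℝ) + k * (b.count s : ℝ) + (cc.count s : ℝ) := by
        intro s
        rw [List.count_append, List.count_append, count_flatten_replicate]
        push_cast
        ring
      have h2 : (∑ s : S, ((a ++ (List.replicate k b).flatten ++ cc).count s : ℝ) * c s)
          = (∑ s : S, ((a.count s : ℝ) + (cc.count s : ℝ)) * c s)
            + (k : ℝ) * ∑ s : S, (b.count s : ℝ) * c s := by
        rw [Finset.mul_sum, ← Finset.sum_add_distrib]
        refine Finset.sum_congr rfl fun s _ => ?_
        rw [hcount s]; ring
      rw [h2] at h1
      linarith
    exact le_zero_of_forall_nsmul_le key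
  · intro h
    -- the finitely many short words of L
    set F : Finset (List S) :=
      ((List.finite_length_lt S n).subset (Set.sep_subset _ fun w => w ∈ L)).toFinset with hF
    have hFmem : ∀ w : List S, w ∈ F ↔ w.length < n ∧ w ∈ L := by
      intro w; simp [hF, Set.mem_setOf_eq]
    set N : ℝ := 1 + ∑ u ∈ F, |∑ s : S, (u.count s : ℝ) * c s| with hNdef
    have hsum_nonneg : (0:ℝ) ≤ ∑ u ∈ F, |∑ s : S, (u.count s : ℝ) * c s| :=
      Finset.sum_nonneg fun u _ => abs_nonneg _
    refine ⟨N, by simp only [hNdef]; linarith, ?_⟩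
    have hn1 : 0 < n := Fintype.card_pos_iff.2 ⟨M.start⟩
    suffices H : ∀ m : ℕ, ∀ w, w.length ≤ m → w ∈ L →
        (∑ s : S, (w.count s : ℝ) * c s) ≤ N from fun w hw => H w.length w le_rfl hw
    intro m
    induction m with
    | zero =>
      intro w hwl hw
      have : w = [] := List.length_eq_zero_iff.1 (Nat.le_zero.1 hwl)
      subst this
      have hwF : [] ∈ F := (hFmem []).2 ⟨by simpa using hn1, hw⟩
      calc ∑ s : S, (([] : List S).count s : ℝ) * c s
          ≤ |∑ s : S, (([] : List S).count s : ℝ) * c s| := le_abs_self _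
        _ ≤ ∑ u ∈ F, |∑ s : S, (u.count s : ℝ) * c s| :=
            Finset.single_le_sum (f := fun u => |∑ s : S, (u.count s : ℝ) * c s|) (fun u _ => abs_nonneg _) hwF
        _ ≤ N := by simp only [hNdef]; linarith
    | succ m ih =>
    intro w hwlen hw
    by_cases hlen : w.length < n
    · have hwF : w ∈ F := (hFmem w).2 ⟨hlen, hw⟩
      calc ∑ s : S, (w.count s : ℝ) * c s ≤ |∑ s : S, (w.count s : ℝ) * c s| := le_abs_self _
        _ ≤ ∑ u ∈ F, |∑ s : S, (u.count s : ℝ) * c s| :=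
            Finset.single_le_sum (f := fun u => |∑ s : S, (u.count s : ℝ) * c s|) (fun u _ => abs_nonneg _) hwF
        _ ≤ N := by simp only [hNdef]; linarith
    · push_neg at hlen
      have hwacc : w ∈ M.accepts := by rw [hM]; exact hw
      obtain ⟨a, b, cc, hsplit, hab, hbne, hpump⟩ := M.pumping_lemma hwacc hlen
      have hmem : ∀ k : ℕ, a ++ (List.replicate k b).flatten ++ cc ∈ L := by
        intro k
        rw [← hM]
        apply hpump
        refine Language.mem_mul.2 ⟨a ++ (List.replicate k b).flatten, ?_, cc, rfl, by simp⟩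
        refine Language.mem_mul.2 ⟨a, rfl, (List.replicate k b).flatten, ?_, rfl⟩
        exact Language.mem_kstar.2 ⟨List.replicate k b, rfl, fun y hy =>
          (List.eq_of_mem_replicate hy)⟩
      have hvP : (fun s => b.count s) ∈ P := ⟨b, rfl, hbne, by omega, a, cc, hmem⟩
      have hb0 : ∑ s : S, (b.count s : ℝ) * c s ≤ 0 := h _ hvP
      have hshort : a ++ cc ∈ L := by
        have := hmem 0
        simpa using this
      have hlt : (a ++ cc).length < w.length := by
        rw [hsplit]
        simp only [List.length_append]
        have : 0 < b.length := List.length_pos_iff.2 hbne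
        omega
      have hrec := ih (a ++ cc) (by omega) hshort
      have hcnt : ∀ s : S, (w.count s : ℝ) = ((a ++ cc).count s : ℝ) + (b.count s : ℝ) := by
        intro s
        rw [hsplit, List.count_append, List.count_append, List.count_append]
        push_cast; ring
      have : ∑ s : S, (w.count s : ℝ) * c s
          = (∑ s : S, ((a ++ cc).count s : ℝ) * c s) + ∑ s : S, (b.count s : ℝ) * c s := by
        rw [← Finset.sum_add_distrib]
        refine Finset.sum_congr rfl fun s _ => ?_
        rw [hcnt s]; ring
      rw [this]
      linarith
end

section
/- In the free product G = C₂ * C₃ = ⟨s,t | s² = t³ = 1⟩ with S = {s,t}, every assignment φ(s) = a, φ(t) = b with a, b ∈ ℝ extends to a weight function on (G,S), and such a weight function is bounded if and only if a + b ≤ 0 and a + 2b ≤ 0. -/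
/-- The group `G = C₂ * C₃ = ⟨s, t | s² = t³ = 1⟩` (isomorphic to `PSL₂(ℤ)`), as a presented
group on two generators. -/
def ModularGroup' : Type :=
  PresentedGroup ({FreeGroup.of 0 ^ 2, FreeGroup.of 1 ^ 3} : Set (FreeGroup (Fin 2)))

noncomputable instance : Group ModularGroup' := by
  unfold ModularGroup'; infer_instance

/-- The generators `s` (of order 2) and `t` (of order 3) of `C₂ * C₃`. -/
def modularGen : Fin 2 → ModularGroup' := fun i =>
  PresentedGroup.of (rels := ({FreeGroup.of 0 ^ 2, FreeGroup.of 1 ^ 3} :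
    Set (FreeGroup (Fin 2)))) i

/-- The length function `ℓ` on `C₂ * C₃` with respect to `S = {s, t}`. -/
noncomputable def modularLen (g : ModularGroup') : ℕ :=
  sInf {n : ℕ | ∃ w : List (Fin 2), w.length = n ∧ (w.map modularGen).prod = g}
/-! Every element of `C₂ * C₃` is represented by a unique reduced word (one with no factor `ss`
or `ttt`): the group acts on reduced words by multiplication followed by reduction (van der
Waerden's trick), and the word reached from the empty word is the normal form. Reduced words are
exactly the geodesics, so `ℓ(gh) = ℓ(g) + ℓ(h)` says that the normal form of `gh` is the
concatenation of those of `g` and `h`. Hence a weight function is the sum of `a`'s and `b`'s along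
the normal form, and every choice of `a, b` gives one. A reduced word is built from blocks `st` and
`st²` with a bounded prefix and suffix, so the weights are bounded above iff `a + b ≤ 0` and
`a + 2b ≤ 0`; the words `(st)ⁿ` and `(st²)ⁿ` show necessity. -/

theorem exists_pos_forall_le_iff_bddAbove_range {ι α : Type*} [LinearOrder α] [Zero α]
    [NoMaxOrder α] (f : ι → α) : (∃ N > 0, ∀ i, f i ≤ N) ↔ BddAbove (Set.range f) := by
  constructor
  · rintro ⟨N, -, hN⟩
    exact ⟨N, Set.forall_mem_range.2 hN⟩
  · rintro ⟨N, hN⟩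
    obtain ⟨M, hM⟩ := exists_gt (max N 0)
    exact ⟨M, (le_max_right N 0).trans_lt hM,
      fun i => ((Set.forall_mem_range.1 hN i).trans (le_max_left N 0)).trans hM.le⟩

namespace ModularGroup'

theorem modularGen_zero_sq : modularGen 0 ^ 2 = 1 :=
  (map_pow _ _ _).symm.trans (PresentedGroup.one_of_mem (Or.inl rfl))

theorem modularGen_one_pow_three : modularGen 1 ^ 3 = 1 :=
  (map_pow _ _ _).symm.trans (PresentedGroup.one_of_mem (Or.inr rfl))

noncomputable def wordProd (w : List (Fin 2)) : ModularGroup' := (w.map modularGen).prod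

@[simp] theorem wordProd_nil : wordProd [] = 1 := rfl

@[simp] theorem wordProd_cons (x : Fin 2) (w : List (Fin 2)) :
    wordProd (x :: w) = modularGen x * wordProd w := List.prod_cons

@[simp] theorem wordProd_append (u v : List (Fin 2)) :
    wordProd (u ++ v) = wordProd u * wordProd v := by
  simp [wordProd]

theorem wordProd_zero_zero : wordProd [0, 0] = 1 := by
  simpa [sq] using modularGen_zero_sq

theorem wordProd_one_one_one : wordProd [1, 1, 1] = 1 := by
  simpa [pow_succ, mul_assoc] using modularGen_one_pow_three

def IsReduced (w : List (Fin 2)) : Prop := ¬ [0, 0] <:+: w ∧ ¬ [1, 1, 1] <:+: w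

@[simp] theorem isReduced_nil : IsReduced [] := by simp [IsReduced]

theorem isReduced_cons_iff {x : Fin 2} {w : List (Fin 2)} :
    IsReduced (x :: w) ↔ ¬ [0, 0] <+: x :: w ∧ ¬ [1, 1, 1] <+: x :: w ∧ IsReduced w := by
  simp only [IsReduced, List.infix_cons_iff]
  tauto

theorem IsReduced.of_cons {x : Fin 2} {w : List (Fin 2)} (h : IsReduced (x :: w)) :
    IsReduced w :=
  (isReduced_cons_iff.mp h).2.2

-- Left multiplication by `s`, resp. `t`, followed by reduction.
def sAct : List (Fin 2) → List (Fin 2)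
  | 0 :: w => w
  | w => 0 :: w

def tAct : List (Fin 2) → List (Fin 2)
  | 1 :: 1 :: w => w
  | w => 1 :: w

theorem isReduced_sAct : ∀ {w : List (Fin 2)}, IsReduced w → IsReduced (sAct w)
  | [], _ => by simp [sAct, isReduced_cons_iff]
  | 0 :: _, h => h.of_cons
  | 1 :: _, h => by simp_all [sAct, isReduced_cons_iff]

theorem isReduced_tAct : ∀ {w : List (Fin 2)}, IsReduced w → IsReduced (tAct w)
  | [], _ => by simp [tAct, isReduced_cons_iff]
  | 0 :: _, h => by simp_all [tAct, isReduced_cons_iff]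
  | [1], _ => by simp [tAct, isReduced_cons_iff]
  | 1 :: 0 :: _, h => by simp_all [tAct, isReduced_cons_iff]
  | 1 :: 1 :: _, h => h.of_cons.of_cons

theorem sAct_sAct : ∀ {w : List (Fin 2)}, IsReduced w → sAct (sAct w) = w
  | [], _ | [0], _ | 0 :: 1 :: _, _ | 1 :: _, _ => rfl
  | 0 :: 0 :: _, h => by simp [isReduced_cons_iff] at h

theorem tAct_tAct_tAct : ∀ {w : List (Fin 2)}, IsReduced w → tAct (tAct (tAct w)) = w
  | [], _ | 0 :: _, _ | [1], _ | 1 :: 0 :: _, _ | [1, 1], _ | 1 :: 1 :: 0 :: _, _ => rfl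
  | 1 :: 1 :: 1 :: _, h => by simp [isReduced_cons_iff] at h

abbrev ReducedWord : Type := {w : List (Fin 2) // IsReduced w}

def sPerm : Equiv.Perm ReducedWord :=
  Function.Involutive.toPerm (fun w => ⟨sAct w.1, isReduced_sAct w.2⟩)
    fun w => Subtype.ext (sAct_sAct w.2)

def tPerm : Equiv.Perm ReducedWord where
  toFun w := ⟨tAct w.1, isReduced_tAct w.2⟩
  invFun w := ⟨tAct (tAct w.1), isReduced_tAct (isReduced_tAct w.2)⟩
  left_inv w := Subtype.ext (tAct_tAct_tAct w.2)
  right_inv w := Subtype.ext (tAct_tAct_tAct w.2)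

theorem sPerm_sq : sPerm ^ 2 = 1 :=
  Equiv.ext fun w => Subtype.ext (sAct_sAct w.2)

theorem tPerm_pow_three : tPerm ^ 3 = 1 :=
  Equiv.ext fun w => Subtype.ext (tAct_tAct_tAct w.2)

def genPerm : Fin 2 → Equiv.Perm ReducedWord := ![sPerm, tPerm]

theorem lift_genPerm_eq_one :
    ∀ r ∈ ({FreeGroup.of 0 ^ 2, FreeGroup.of 1 ^ 3} : Set (FreeGroup (Fin 2))),
      FreeGroup.lift genPerm r = 1 := by
  rintro r (rfl | rfl) <;> simp [genPerm, sPerm_sq, tPerm_pow_three]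

noncomputable def wordAction : ModularGroup' →* Equiv.Perm ReducedWord :=
  PresentedGroup.toGroup lift_genPerm_eq_one

theorem wordAction_modularGen (x : Fin 2) : wordAction (modularGen x) = genPerm x :=
  PresentedGroup.toGroup.of lift_genPerm_eq_one

def genAct : Fin 2 → List (Fin 2) → List (Fin 2) := ![sAct, tAct]

theorem wordAction_modularGen_apply (x : Fin 2) (w : ReducedWord) :
    (wordAction (modularGen x) w).1 = genAct x w.1 := by
  rw [wordAction_modularGen]
  fin_cases x <;> rfl

theorem wordProd_sAct : ∀ w : List (Fin 2), wordProd (sAct w) = modularGen 0 * wordProd w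
  | 0 :: w => by rw [wordProd_cons, ← mul_assoc, ← sq, modularGen_zero_sq, one_mul]; rfl
  | [] | 1 :: _ => rfl

theorem wordProd_tAct : ∀ w : List (Fin 2), wordProd (tAct w) = modularGen 1 * wordProd w
  | 1 :: 1 :: w => by
      rw [wordProd_cons, wordProd_cons, ← mul_assoc, ← mul_assoc, ← sq, ← pow_succ,
        modularGen_one_pow_three, one_mul]
      rfl
  | [] | 0 :: _ | [1] | 1 :: 0 :: _ => rfl

theorem wordProd_genAct (x : Fin 2) (w : List (Fin 2)) :
    wordProd (genAct x w) = modularGen x * wordProd w := by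
  fin_cases x
  exacts [wordProd_sAct w, wordProd_tAct w]

theorem wordProd_wordAction (g : ModularGroup') (w : ReducedWord) :
    wordProd (wordAction g w).1 = g * wordProd w.1 := by
  let H : Subgroup ModularGroup' :=
    { carrier := {g | ∀ w : ReducedWord, wordProd (wordAction g w).1 = g * wordProd w.1}
      one_mem' := fun w => by simp
      mul_mem' := fun {g h} hg hh w => by
        rw [map_mul, Equiv.Perm.mul_apply, hg, hh, mul_assoc]
      inv_mem' := fun {g} hg w => by
        rw [eq_inv_mul_iff_mul_eq, ← hg, ← Equiv.Perm.mul_apply, ← map_mul, mul_inv_cancel,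
          map_one, Equiv.Perm.one_apply] }
  refine PresentedGroup.generated_by _ H (fun x w => ?_) g w
  exact (congrArg wordProd (wordAction_modularGen_apply x w)).trans (wordProd_genAct x w.1)

noncomputable def normalForm (g : ModularGroup') : List (Fin 2) :=
  (wordAction g ⟨[], isReduced_nil⟩).1

theorem isReduced_normalForm (g : ModularGroup') : IsReduced (normalForm g) :=
  (wordAction g _).2

@[simp] theorem wordProd_normalForm (g : ModularGroup') : wordProd (normalForm g) = g :=
  (wordProd_wordAction g _).trans (mul_one g)

theorem normalForm_modularGen_mul (x : Fin 2) (g : ModularGroup') :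
    normalForm (modularGen x * g) = genAct x (normalForm g) := by
  rw [normalForm, map_mul, Equiv.Perm.mul_apply, wordAction_modularGen_apply, normalForm]

theorem genAct_of_isReduced_cons : ∀ {x : Fin 2} {w : List (Fin 2)}, IsReduced (x :: w) →
    genAct x w = x :: w
  | 0, [], _ | 0, 1 :: _, _ | 1, [], _ | 1, 0 :: _, _ | 1, [1], _ | 1, 1 :: 0 :: _, _ => rfl
  | 0, 0 :: _, h | 1, 1 :: 1 :: _, h => by simp [isReduced_cons_iff] at h

theorem normalForm_wordProd : ∀ {w : List (Fin 2)}, IsReduced w → normalForm (wordProd w) = w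
  | [], _ => by rw [wordProd_nil, normalForm, map_one]; rfl
  | x :: w, h => by
      rw [wordProd_cons, normalForm_modularGen_mul, normalForm_wordProd h.of_cons,
        genAct_of_isReduced_cons h]

theorem exists_shorter_of_not_isReduced {w : List (Fin 2)} (h : ¬ IsReduced w) :
    ∃ v, wordProd v = wordProd w ∧ v.length < w.length := by
  simp only [IsReduced, not_and_or, not_not] at h
  rcases h with ⟨p, q, rfl⟩ | ⟨p, q, rfl⟩
  · refine ⟨p ++ q, ?_, by simp⟩
    simp only [wordProd_append, wordProd_zero_zero, mul_one]
  · refine ⟨p ++ q, ?_, by simp; omega⟩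
    simp only [wordProd_append, wordProd_one_one_one, mul_one]

theorem exists_length_eq_modularLen (g : ModularGroup') :
    ∃ w, w.length = modularLen g ∧ wordProd w = g := by
  have hne : {n | ∃ w : List (Fin 2), w.length = n ∧ wordProd w = g}.Nonempty :=
    ⟨_, normalForm g, rfl, wordProd_normalForm g⟩
  exact Nat.sInf_mem hne

theorem modularLen_wordProd_le (w : List (Fin 2)) : modularLen (wordProd w) ≤ w.length :=
  Nat.sInf_le ⟨w, rfl, rfl⟩

theorem isReduced_of_length_le_modularLen {w : List (Fin 2)}
    (h : w.length ≤ modularLen (wordProd w)) : IsReduced w := by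
  by_contra hw
  obtain ⟨v, hv, hlt⟩ := exists_shorter_of_not_isReduced hw
  have := modularLen_wordProd_le v
  rw [hv] at this
  omega

theorem modularLen_eq_length_normalForm (g : ModularGroup') :
    modularLen g = (normalForm g).length := by
  obtain ⟨w, hw, rfl⟩ := exists_length_eq_modularLen g
  rw [normalForm_wordProd (isReduced_of_length_le_modularLen hw.le), hw]

theorem modularLen_wordProd {w : List (Fin 2)} (h : IsReduced w) :
    modularLen (wordProd w) = w.length := by
  rw [modularLen_eq_length_normalForm, normalForm_wordProd h]

theorem normalForm_mul {g h : ModularGroup'}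
    (hgh : modularLen (g * h) = modularLen g + modularLen h) :
    normalForm (g * h) = normalForm g ++ normalForm h := by
  have hprod : wordProd (normalForm g ++ normalForm h) = g * h := by simp
  have hred : IsReduced (normalForm g ++ normalForm h) := by
    apply isReduced_of_length_le_modularLen
    rw [hprod, hgh, modularLen_eq_length_normalForm, modularLen_eq_length_normalForm,
      List.length_append]
  rw [← hprod, normalForm_wordProd hred]

theorem modularLen_modularGen (x : Fin 2) : modularLen (modularGen x) = 1 := by
  simpa using modularLen_wordProd (w := [x]) (by simp [isReduced_cons_iff])

def IsWeightFunction (φ : ModularGroup' → ℝ) : Prop :=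
  ∀ g h, modularLen (g * h) = modularLen g + modularLen h → φ (g * h) = φ g + φ h

section Weight

variable (a b : ℝ)

def wordWeight (w : List (Fin 2)) : ℝ := (w.map ![a, b]).sum

@[simp] theorem wordWeight_nil : wordWeight a b [] = 0 := rfl

@[simp] theorem wordWeight_cons (x : Fin 2) (w : List (Fin 2)) :
    wordWeight a b (x :: w) = ![a, b] x + wordWeight a b w := List.sum_cons

@[simp] theorem wordWeight_cons_zero (w : List (Fin 2)) :
    wordWeight a b (0 :: w) = a + wordWeight a b w := List.sum_cons

@[simp] theorem wordWeight_cons_one (w : List (Fin 2)) :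
    wordWeight a b (1 :: w) = b + wordWeight a b w := List.sum_cons

@[simp] theorem wordWeight_append (u v : List (Fin 2)) :
    wordWeight a b (u ++ v) = wordWeight a b u + wordWeight a b v := by
  simp [wordWeight]

@[simp] theorem wordWeight_replicate (k : ℕ) (x : Fin 2) :
    wordWeight a b (List.replicate k x) = k * ![a, b] x := by
  simp [wordWeight, List.map_replicate, List.sum_replicate]

noncomputable def canonicalWeight (g : ModularGroup') : ℝ := wordWeight a b (normalForm g)

theorem isWeightFunction_canonicalWeight : IsWeightFunction (canonicalWeight a b) :=
  fun _ _ hgh => by rw [canonicalWeight, normalForm_mul hgh, wordWeight_append]; rfl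

theorem canonicalWeight_wordProd {w : List (Fin 2)} (h : IsReduced w) :
    canonicalWeight a b (wordProd w) = wordWeight a b w := by
  rw [canonicalWeight, normalForm_wordProd h]

theorem canonicalWeight_modularGen (x : Fin 2) :
    canonicalWeight a b (modularGen x) = ![a, b] x := by
  simpa using canonicalWeight_wordProd a b (w := [x]) (by simp [isReduced_cons_iff])

end Weight

namespace IsWeightFunction

variable {φ : ModularGroup' → ℝ}

theorem map_one (hφ : IsWeightFunction φ) : φ 1 = 0 := by
  have h := hφ 1 1 (by rw [mul_one, ← wordProd_nil, modularLen_wordProd isReduced_nil]; rfl)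
  rw [mul_one] at h
  linarith

theorem apply_wordProd (hφ : IsWeightFunction φ) : ∀ {w : List (Fin 2)}, IsReduced w →
    φ (wordProd w) = wordWeight (φ (modularGen 0)) (φ (modularGen 1)) w
  | [], _ => hφ.map_one
  | x :: w, h => by
      have hlen : modularLen (modularGen x * wordProd w)
          = modularLen (modularGen x) + modularLen (wordProd w) := by
        rw [← wordProd_cons, modularLen_wordProd h, modularLen_wordProd h.of_cons,
          modularLen_modularGen, List.length_cons, add_comm]
      rw [wordProd_cons, hφ _ _ hlen, hφ.apply_wordProd h.of_cons, wordWeight_cons]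
      fin_cases x <;> rfl

theorem eq_canonicalWeight (hφ : IsWeightFunction φ) :
    φ = canonicalWeight (φ (modularGen 0)) (φ (modularGen 1)) := by
  funext g
  rw [← wordProd_normalForm g, canonicalWeight_wordProd _ _ (isReduced_normalForm g),
    hφ.apply_wordProd (isReduced_normalForm g)]

end IsWeightFunction

section Bounds

variable {a b : ℝ}

-- A reduced word starting with `s` is a product of blocks `s t` and `s t²`, of weights
-- `a + b ≤ 0` and `a + 2b ≤ 0`, possibly followed by a single `s`.
theorem wordWeight_cons_zero_le (h1 : a + b ≤ 0) (h2 : a + 2 * b ≤ 0) :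
    ∀ {w : List (Fin 2)}, IsReduced (0 :: w) → wordWeight a b (0 :: w) ≤ |a|
  | [], _ => by simpa using le_abs_self a
  | [1], _ => by simpa using h1.trans (abs_nonneg a)
  | [1, 1], _ => by simpa [← add_assoc, ← two_mul] using h2.trans (abs_nonneg a)
  | 1 :: 0 :: w, h => by
      have := wordWeight_cons_zero_le h1 h2 h.of_cons.of_cons
      simp only [wordWeight_cons_zero, wordWeight_cons_one] at this ⊢
      linarith
  | 1 :: 1 :: 0 :: w, h => by
      have := wordWeight_cons_zero_le h1 h2 h.of_cons.of_cons.of_cons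
      simp only [wordWeight_cons_zero, wordWeight_cons_one] at this ⊢
      linarith
  | 0 :: _, h | 1 :: 1 :: 1 :: _, h => by simp [isReduced_cons_iff] at h

theorem wordWeight_le (h1 : a + b ≤ 0) (h2 : a + 2 * b ≤ 0) :
    ∀ {w : List (Fin 2)}, IsReduced w → wordWeight a b w ≤ |a| + 2 * |b|
  | [], _ => by simp only [wordWeight_nil]; positivity
  | 0 :: w, h => by linarith [wordWeight_cons_zero_le h1 h2 h, abs_nonneg b]
  | [1], _ => by
      simp only [wordWeight_cons_one, wordWeight_nil]
      linarith [abs_nonneg a, le_abs_self b, abs_nonneg b]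
  | [1, 1], _ => by
      simp only [wordWeight_cons_one, wordWeight_nil]
      linarith [abs_nonneg a, le_abs_self b]
  | 1 :: 0 :: w, h => by
      have := wordWeight_cons_zero_le h1 h2 h.of_cons
      rw [wordWeight_cons_one]
      linarith [le_abs_self b, abs_nonneg b]
  | 1 :: 1 :: 0 :: w, h => by
      have := wordWeight_cons_zero_le h1 h2 h.of_cons.of_cons
      rw [wordWeight_cons_one, wordWeight_cons_one]
      linarith [le_abs_self b]
  | 1 :: 1 :: 1 :: _, h => by simp [isReduced_cons_iff] at h

end Bounds

def stPow (k n : ℕ) : List (Fin 2) := (List.replicate n (0 :: List.replicate k 1)).flatten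

theorem stPow_succ (k n : ℕ) : stPow k (n + 1) = 0 :: List.replicate k 1 ++ stPow k n := rfl

theorem isReduced_stPow {k : ℕ} (hk : k = 1 ∨ k = 2) : ∀ n, IsReduced (stPow k n)
  | 0 => isReduced_nil
  | 1 => by rcases hk with rfl | rfl <;> simp [stPow, isReduced_cons_iff]
  | n + 2 => by
      have := isReduced_stPow hk (n + 1)
      rcases hk with rfl | rfl <;> simp_all [stPow_succ, isReduced_cons_iff]

theorem wordWeight_stPow (a b : ℝ) (k n : ℕ) :
    wordWeight a b (stPow k n) = n * (a + k * b) := by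
  induction n with
  | zero => simp [stPow]
  | succ n ih =>
      rw [stPow_succ, wordWeight_append, wordWeight_cons_zero, wordWeight_replicate, ih,
        Matrix.cons_val_one, Matrix.cons_val_fin_one, Nat.cast_succ]
      ring

theorem bddAbove_range_canonicalWeight_iff (a b : ℝ) :
    BddAbove (Set.range (canonicalWeight a b)) ↔ a + b ≤ 0 ∧ a + 2 * b ≤ 0 := by
  constructor
  · rintro ⟨N, hN⟩
    have hk : ∀ k : ℕ, (k = 1 ∨ k = 2) → a + k * b ≤ 0 := by
      intro k hk
      by_contra! hpos
      obtain ⟨n, hn⟩ := exists_nat_gt (N / (a + k * b))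
      have hle := hN ⟨wordProd (stPow k n), rfl⟩
      rw [canonicalWeight_wordProd _ _ (isReduced_stPow hk n), wordWeight_stPow] at hle
      rw [div_lt_iff₀ hpos] at hn
      linarith
    exact ⟨by simpa using hk 1 (.inl rfl), by simpa using hk 2 (.inr rfl)⟩
  · rintro ⟨h1, h2⟩
    exact ⟨|a| + 2 * |b|,
      Set.forall_mem_range.2 fun g => wordWeight_le h1 h2 (isReduced_normalForm g)⟩

end ModularGroup'

open ModularGroup'

/-- In the free product `G = C₂ * C₃ = ⟨s, t | s² = t³ = 1⟩` with `S = {s, t}`, every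
assignment `φ s = a`, `φ t = b` with `a, b ∈ ℝ` extends to a weight function on `(G, S)`, and
such a weight function is bounded if and only if `a + b ≤ 0` and `a + 2b ≤ 0`. -/
theorem modularGroup_weightFunctions (a b : ℝ) :
    (∃ φ : ModularGroup' → ℝ,
      (∀ g h, modularLen (g * h) = modularLen g + modularLen h → φ (g * h) = φ g + φ h) ∧
      φ (modularGen 0) = a ∧ φ (modularGen 1) = b) ∧
    (∀ φ : ModularGroup' → ℝ,
      (∀ g h, modularLen (g * h) = modularLen g + modularLen h → φ (g * h) = φ g + φ h) →
      φ (modularGen 0) = a → φ (modularGen 1) = b →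
      ((∃ N > (0 : ℝ), ∀ g, φ g ≤ N) ↔ a + b ≤ 0 ∧ a + 2 * b ≤ 0)) := by
  refine ⟨⟨canonicalWeight a b, isWeightFunction_canonicalWeight a b,
    canonicalWeight_modularGen a b 0, canonicalWeight_modularGen a b 1⟩, fun φ hφ hs ht => ?_⟩
  have hφ_eq : φ = canonicalWeight a b := by
    rw [← hs, ← ht]
    exact IsWeightFunction.eq_canonicalWeight hφ
  rw [exists_pos_forall_le_iff_bddAbove_range, hφ_eq, bddAbove_range_canonicalWeight_iff]
end

section
/- Let (W,S) be a Coxeter system with Coxeter matrix (m_{s,t}) and let (a_s)_{s∈S} be real numbers. There exists a weight function φ : W → ℝ with φ(s) = a_s for all s ∈ S if and only if a_s = a_t whenever m_{s,t} is odd. -/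
/-!
If `M i j` is odd then so is the order `2e+1` of `s i * s j`; with `u = (s i * s j)^e` the two
alternating words of length `2e+1` are reduced and give `s j * u = u * s i` with lengths adding
on both sides, so a weight function takes the same value at `s i` and `s j`.

Conversely, a sign character of `W` separates the classes of the relation "`M i j` odd", so `a`
is constant on conjugacy classes of simple reflections and labels every reflection. Summing `a`
over a reduced word of `w` is then summing the labels over its left inversion sequence, and that
sequence is, up to order, the set of left inversions of `w`, whatever the reduced word. This set
is read off the cocycle `W → (W → ℤˣ)` obtained by lifting `s i ↦ (δ_{s i}, s i)` to
`(W → ℤˣ) ⋊ W`, the group of sign-valued functions on `W` twisted by conjugation.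
-/

theorem List.prod_map_mulSingle_apply {α X : Type*} [DecidableEq α] [Monoid X] (l : List α)
    (x : X) (b : α) : (l.map (Pi.mulSingle · x)).prod b = x ^ l.count b := by
  induction l with
  | nil => simp
  | cons a l ih =>
    by_cases hab : a = b
    · subst hab
      simp [ih, pow_succ']
    · simp [ih, hab, Ne.symm hab]

theorem CoxeterMatrix.isLiftable_of_odd {B : Type*} {M : CoxeterMatrix B} {f : B → ℤˣ}
    (hf : ∀ i j, Odd (M i j) → f i = f j) : M.IsLiftable f := by
  intro i j
  rcases Nat.even_or_odd (M i j) with ⟨k, hk⟩ | hij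
  · rw [hk, ← two_mul, pow_mul, Int.units_sq, one_pow]
  · rw [hf i j hij, Int.units_mul_self, one_pow]

namespace CoxeterSystem

variable {B W : Type*} [Group W] {M : CoxeterMatrix B} (cs : CoxeterSystem M W)

local prefix:100 "s" => cs.simple
local prefix:100 "π" => cs.wordProd
local prefix:100 "ℓ" => cs.length
local prefix:100 "lis" => cs.leftInvSeq

def conjArrow : W →* MulAut (W → ℤˣ) :=
  (mulAutArrow (G := ConjAct W)).comp ConjAct.toConjAct.toMonoidHom

lemma conjArrow_apply (w : W) (f : W → ℤˣ) (t : W) : conjArrow w f t = f (w⁻¹ * t * w) := by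
  change f ((ConjAct.toConjAct w)⁻¹ • t) = _
  simp [ConjAct.smul_def]

lemma simple_mul_pow_inv (i j : B) (k : ℕ) :
    s i * ((s i * s j) ^ k)⁻¹ = (s i * s j) ^ k * s i := by
  rw [← inv_pow, mul_inv_rev, inv_simple, inv_simple]
  exact (SemiconjBy.pow_right (mul_assoc _ _ _).symm k).eq

lemma orderOf_simple_mul_simple_swap (i j : B) : orderOf (s j * s i) = orderOf (s i * s j) := by
  rw [← orderOf_inv, mul_inv_rev, inv_simple, inv_simple]

noncomputable section

open Classical

lemma conjArrow_mulSingle (w t : W) (x : ℤˣ) :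
    conjArrow w (Pi.mulSingle t x) = Pi.mulSingle (w * t * w⁻¹) x := by
  ext r
  simp only [conjArrow_apply, Pi.mulSingle_apply]
  congr 2
  exact propext ⟨fun h => by rw [← h]; group, fun h => by rw [h]; group⟩

def inversionGen (i : B) : (W → ℤˣ) ⋊[conjArrow] W := ⟨Pi.mulSingle (s i) (-1), s i⟩

lemma inversionGen_mul_pow (i j : B) (k : ℕ) :
    (cs.inversionGen i * cs.inversionGen j) ^ k =
      ⟨∏ c ∈ Finset.range (2 * k), Pi.mulSingle ((s i * s j) ^ c * s i) (-1),
        (s i * s j) ^ k⟩ := by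
  induction k with
  | zero => ext1 <;> simp
  | succ k ih =>
    rw [pow_succ, ih, inversionGen, inversionGen]
    ext1
    · simp only [SemidirectProduct.mul_left, map_mul, conjArrow_mulSingle, inv_simple, mul_add,
        Finset.prod_range_succ, mul_assoc]
      have h := cs.simple_mul_pow_inv i j k
      congr 3
      · rw [h, ← mul_assoc, ← pow_add, two_mul]
      · rw [h, ← mul_assoc (s i) (s j), ← mul_assoc, ← mul_assoc, ← pow_succ, ← pow_add]
        ring_nf
    · simp only [SemidirectProduct.mul_right, pow_succ]

-- As `(s i * s j) ^ M i j = 1`, the `2 * M i j` factors are the first `M i j` of them twice.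
lemma isLiftable_inversionGen : M.IsLiftable cs.inversionGen := by
  intro i j
  rw [inversionGen_mul_pow, two_mul, Finset.prod_range_add]
  simp only [pow_add, cs.simple_mul_simple_pow, one_mul]
  ext1
  · funext t
    exact Int.units_mul_self _
  · rfl

def inversionHom : W →* (W → ℤˣ) ⋊[conjArrow] W := cs.lift ⟨_, cs.isLiftable_inversionGen⟩

def inversionSign (w : W) : W → ℤˣ := (cs.inversionHom w).left

lemma inversionHom_simple (i : B) : cs.inversionHom (s i) = cs.inversionGen i :=
  cs.lift_apply_simple _ i

lemma inversionHom_right (w : W) : (cs.inversionHom w).right = w := by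
  have : SemidirectProduct.rightHom.comp cs.inversionHom = MonoidHom.id W :=
    cs.ext_simple fun i => by simp [inversionHom_simple, inversionGen]
  exact DFunLike.congr_fun this w

lemma inversionSign_mul (x y : W) :
    cs.inversionSign (x * y) = cs.inversionSign x * conjArrow x (cs.inversionSign y) := by
  simp only [inversionSign, map_mul, SemidirectProduct.mul_left, inversionHom_right]

lemma inversionSign_wordProd (ω : List B) :
    cs.inversionSign (π ω) = ((lis ω).map (Pi.mulSingle · (-1))).prod := by
  induction ω with
  | nil => simp [inversionSign, wordProd_nil]
  | cons i ω ih =>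
    rw [wordProd_cons, inversionSign_mul, ih, leftInvSeq, List.map_cons, List.prod_cons,
      inversionSign, inversionHom_simple, map_list_prod, List.map_map, List.map_map]
    congr 3
    funext t
    simp [conjArrow_mulSingle]

lemma inversionSign_wordProd_apply (ω : List B) (t : W) :
    cs.inversionSign (π ω) t = (-1) ^ (lis ω).count t := by
  rw [inversionSign_wordProd, List.prod_map_mulSingle_apply]

lemma mem_leftInvSeq_of_inversionSign_eq_neg_one {ω : List B} {t : W}
    (h : cs.inversionSign (π ω) t = -1) : t ∈ lis ω := by
  by_contra ht
  rw [inversionSign_wordProd_apply, List.count_eq_zero.mpr ht, pow_zero] at h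
  exact absurd h (by decide)

lemma inversionSign_wordProd_eq_neg_one_iff {ω : List B} (hω : (lis ω).Nodup) {t : W} :
    cs.inversionSign (π ω) t = -1 ↔ t ∈ lis ω :=
  ⟨cs.mem_leftInvSeq_of_inversionSign_eq_neg_one, fun ht => by
    rw [inversionSign_wordProd_apply, List.count_eq_one_of_mem hω ht, pow_one]⟩

theorem isReduced_iff_nodup_leftInvSeq (ω : List B) : cs.IsReduced ω ↔ (lis ω).Nodup := by
  refine ⟨IsReduced.nodup_leftInvSeq cs, fun hω => ?_⟩
  obtain ⟨ω', hω', hπ⟩ := cs.exists_isReduced (π ω)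
  have hsub : lis ω ⊆ lis ω' := fun t ht =>
    cs.mem_leftInvSeq_of_inversionSign_eq_neg_one
      (by rw [← hπ, (cs.inversionSign_wordProd_eq_neg_one_iff hω).mpr ht])
  have hlen := (hω.subperm hsub).length_le
  rw [length_leftInvSeq, length_leftInvSeq, ← hω'.eq, ← hπ] at hlen
  exact le_antisymm (cs.length_wordProd_le ω) hlen

variable {cs} in
theorem IsReduced.leftInvSeq_perm {ω ω' : List B} (hω : cs.IsReduced ω) (hω' : cs.IsReduced ω')
    (h : π ω = π ω') : (lis ω).Perm (lis ω') := by
  have hn := hω.nodup_leftInvSeq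
  have hn' := hω'.nodup_leftInvSeq
  refine (List.perm_ext_iff_of_nodup hn hn').mpr fun t => ?_
  rw [← cs.inversionSign_wordProd_eq_neg_one_iff hn,
    ← cs.inversionSign_wordProd_eq_neg_one_iff hn', h]

end

lemma nodup_take_leftInvSeq_alternatingWord {i j : B} {p r : ℕ} (hr : r ≤ orderOf (s j * s i)) :
    ((lis (alternatingWord i j (2 * p))).take r).Nodup := by
  rw [List.nodup_iff_injective_get]
  rintro ⟨a, ha⟩ ⟨b, hb⟩ hab
  simp only [List.length_take, length_leftInvSeq, length_alternatingWord, lt_min_iff] at ha hb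
  simp only [List.get_eq_getElem, List.getElem_take,
    getElem_leftInvSeq_alternatingWord cs i j p _ ha.2,
    getElem_leftInvSeq_alternatingWord cs i j p _ hb.2, prod_alternatingWord_eq_mul_pow] at hab
  rw [if_neg (by simp), if_neg (by simp), Nat.mul_add_div two_pos, Nat.mul_add_div two_pos] at hab
  simp only [Nat.one_lt_ofNat, Nat.div_eq_of_lt, add_zero, mul_right_inj] at hab
  exact Fin.ext (pow_injOn_Iio_orderOf (by simp; omega) (by simp; omega) hab)

theorem isReduced_alternatingWord {i j : B} {r : ℕ} (hr : r ≤ orderOf (s i * s j)) :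
    cs.IsReduced (alternatingWord i j r) := by
  obtain ⟨x, y, hword, horder⟩ : ∃ x y, (alternatingWord x y (2 * (r + 1))).take r =
      alternatingWord i j r ∧ orderOf (s y * s x) = orderOf (s i * s j) := by
    rcases Nat.even_or_odd r with hr | hr
    · refine ⟨i, j, ?_, cs.orderOf_simple_mul_simple_swap i j⟩
      simp [listTake_alternatingWord _ _ _ _ (by omega : r < 2 * (r + 1)), hr]
    · refine ⟨j, i, ?_, rfl⟩
      simp [listTake_alternatingWord _ _ _ _ (by omega : r < 2 * (r + 1)),
        Nat.not_even_iff_odd.mpr hr]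
  rw [isReduced_iff_nodup_leftInvSeq, ← hword, leftInvSeq_take]
  exact cs.nodup_take_leftInvSeq_alternatingWord (horder ▸ hr)

lemma simple_mul_pow_eq_pow_mul_simple {i j : B} {e : ℕ} (he : (s i * s j) ^ (2 * e + 1) = 1) :
    s j * (s i * s j) ^ e = (s i * s j) ^ e * s i := by
  have h : s i * s j * (s i * s j) ^ e = ((s i * s j) ^ e)⁻¹ := by
    refine eq_inv_of_mul_eq_one_right ?_
    rw [← mul_assoc, ← pow_succ, ← pow_add, ← he]
    ring_nf
  calc s j * (s i * s j) ^ e = s i * (s i * s j * (s i * s j) ^ e) := by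
        simp [← mul_assoc]
    _ = (s i * s j) ^ e * s i := by rw [h, simple_mul_pow_inv]

def IsWeightFunction {A : Type*} [Add A] (φ : W → A) : Prop :=
  ∀ x y : W, ℓ (x * y) = ℓ x + ℓ y → φ (x * y) = φ x + φ y

variable {cs} in
theorem IsWeightFunction.apply_simple_eq_of_odd {A : Type*} [AddCancelCommMonoid A] {φ : W → A}
    (hφ : cs.IsWeightFunction φ) {i j : B} (hij : Odd (M i j)) : φ (s i) = φ (s j) := by
  obtain ⟨e, he⟩ : Odd (orderOf (s i * s j)) :=
    hij.of_dvd_nat (orderOf_dvd_of_pow_eq_one (cs.simple_mul_simple_pow i j))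
  have hji : orderOf (s j * s i) = 2 * e + 1 := (cs.orderOf_simple_mul_simple_swap i j).trans he
  have hlen : ∀ x y, orderOf (s x * s y) = 2 * e + 1 →
      ℓ (π alternatingWord x y (2 * e + 1)) = 2 * e + 1 := fun x y hxy => by
    simpa using (cs.isReduced_alternatingWord hxy.ge).eq
  have hu : π (alternatingWord i j (2 * e)) = (s i * s j) ^ e := by
    simp [prod_alternatingWord_eq_mul_pow]
  have hℓu : ℓ ((s i * s j) ^ e) = 2 * e := by
    simpa [hu] using (cs.isReduced_alternatingWord (i := i) (j := j) (r := 2 * e) (by omega)).eq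
  have hleft : ℓ (s j * (s i * s j) ^ e) = ℓ (s j) + ℓ ((s i * s j) ^ e) := by
    have hcons : alternatingWord i j (2 * e + 1) = j :: alternatingWord i j (2 * e) := by
      simp [alternatingWord_succ']
    rw [← hu, ← wordProd_cons, ← hcons, hlen i j he, length_simple, hu, hℓu, add_comm]
  have hright : ℓ ((s i * s j) ^ e * s i) = ℓ ((s i * s j) ^ e) + ℓ (s i) := by
    rw [← hu, ← wordProd_concat, ← alternatingWord_succ, hlen j i hji, length_simple, hu, hℓu]
  have hcomm := cs.simple_mul_pow_eq_pow_mul_simple (he ▸ pow_orderOf_eq_one (s i * s j))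
  have hsum := hφ _ _ hleft
  rw [hcomm, hφ _ _ hright, add_comm] at hsum
  exact add_right_cancel hsum

open Classical in
theorem reflTransGen_odd_of_isConj {i j : B} (h : IsConj (s i) (s j)) :
    Relation.ReflTransGen (fun p q => Odd (M p q)) i j := by
  set R := Relation.ReflTransGen (fun p q => Odd (M p q)) i
  have hR : ∀ p q, Odd (M p q) → (R p ↔ R q) := fun p q hpq =>
    ⟨fun hp => hp.tail hpq, fun hq => hq.tail (M.symmetric p q ▸ hpq)⟩
  let χ : W →* ℤˣ := cs.lift ⟨fun p => if R p then -1 else 1,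
    CoxeterMatrix.isLiftable_of_odd fun p q hpq => by simp only [hR p q hpq]⟩
  have hχ : χ (s i) = χ (s j) := isConj_iff_eq.mp (χ.map_isConj h)
  by_contra hij
  simp only [χ, R, lift_apply_simple, Relation.ReflTransGen.refl, if_true, if_neg hij] at hχ
  exact absurd hχ (by decide)

variable {A : Type*}

open Classical in
noncomputable def reflectionLabel [Zero A] (a : B → A) (t : W) : A :=
  if h : cs.IsReflection t then a h.choose_spec.choose else 0

theorem reflectionLabel_conj [Zero A] {a : B → A} (ha : ∀ i j, Odd (M i j) → a i = a j)
    (w : W) (i : B) : cs.reflectionLabel a (w * s i * w⁻¹) = a i := by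
  have h : cs.IsReflection (w * s i * w⁻¹) := ⟨w, i, rfl⟩
  rw [reflectionLabel, dif_pos h]
  have hconj : IsConj (s h.choose_spec.choose) (s i) :=
    (isConj_iff.mpr ⟨_, h.choose_spec.choose_spec.symm⟩).trans (isConj_iff.mpr ⟨w, rfl⟩).symm
  have hpath := cs.reflTransGen_odd_of_isConj hconj
  generalize h.choose_spec.choose = k at hpath ⊢
  clear hconj h
  induction hpath with
  | refl => rfl
  | tail _ hpq ih => exact ih.trans (ha _ _ hpq)

theorem map_reflectionLabel_leftInvSeq [Zero A] {a : B → A} (ha : ∀ i j, Odd (M i j) → a i = a j)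
    (ω : List B) : (lis ω).map (cs.reflectionLabel a) = ω.map a :=
  List.ext_getElem (by simp) fun k _ hk => by
    rw [List.getElem_map, List.getElem_map, getElem_leftInvSeq cs ω k (by simpa using hk),
      reflectionLabel_conj cs ha]

theorem sum_map_eq_of_isReduced [AddCommMonoid A] {a : B → A}
    (ha : ∀ i j, Odd (M i j) → a i = a j) {ω ω' : List B} (hω : cs.IsReduced ω)
    (hω' : cs.IsReduced ω') (h : π ω = π ω') :
    (ω.map a).sum = (ω'.map a).sum := by
  rw [← map_reflectionLabel_leftInvSeq cs ha, ← map_reflectionLabel_leftInvSeq cs ha]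
  exact ((hω.leftInvSeq_perm hω' h).map _).sum_eq

theorem exists_isWeightFunction_of_sum_eq [AddMonoid A] (a : B → A)
    (h : ∀ ω ω', cs.IsReduced ω → cs.IsReduced ω' → π ω = π ω' →
      (ω.map a).sum = (ω'.map a).sum) :
    ∃ φ : W → A, cs.IsWeightFunction φ ∧ ∀ i, φ (s i) = a i := by
  choose ρ hρ using cs.exists_isReduced
  refine ⟨fun w => ((ρ w).map a).sum, fun x y hxy => ?_, fun i => ?_⟩
  · have hπ : π (ρ x ++ ρ y) = x * y := by rw [wordProd_append, ← (hρ x).2, ← (hρ y).2]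
    have hred : cs.IsReduced (ρ x ++ ρ y) := by
      have hx := (hρ x).1.eq
      have hy := (hρ y).1.eq
      rw [← (hρ x).2] at hx
      rw [← (hρ y).2] at hy
      rw [IsReduced, hπ, hxy, List.length_append, hx, hy]
    rw [← List.sum_append, ← List.map_append]
    exact h _ _ (hρ _).1 hred (hπ.trans (hρ _).2).symm
  · simpa using h (ρ (s i)) [i] (hρ _).1 (by simp [IsReduced]) (by simp [← (hρ _).2])

end CoxeterSystem

/-- Let `(W, S)` be a Coxeter system with Coxeter matrix `(m_{s,t})` and let `(a_s)_{s ∈ S}`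
be real numbers. There exists a weight function `φ : W → ℝ` (that is, `φ (x y) = φ x + φ y`
whenever `ℓ (x y) = ℓ x + ℓ y`) with `φ s = a_s` for all simple reflections `s`, if and only
if `a_s = a_t` whenever `m_{s,t}` is odd. -/
theorem coxeter_weightFunction_exists_iff {B W : Type*} [Group W] {M : CoxeterMatrix B}
    (cs : CoxeterSystem M W) (a : B → ℝ) :
    (∃ φ : W → ℝ,
        (∀ x y : W, cs.length (x * y) = cs.length x + cs.length y →
          φ (x * y) = φ x + φ y) ∧
        ∀ i : B, φ (cs.simple i) = a i) ↔
      ∀ i j : B, Odd (M i j) → a i = a j := by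
  constructor
  · rintro ⟨φ, hφ, hφa⟩ i j hij
    rw [← hφa i, ← hφa j]
    exact CoxeterSystem.IsWeightFunction.apply_simple_eq_of_odd hφ hij
  · intro ha
    exact cs.exists_isWeightFunction_of_sum_eq a fun _ _ => cs.sum_map_eq_of_isReduced ha
end

section
/- Let φ be a bounded weight function on a Coxeter system (W,S) and let g ∈ Γ_{W,S}(φ) attain the bound. Then for every s ∈ S with φ(s) > 0 one has ℓ(sg) = ℓ(g) − 1 and ℓ(gs) = ℓ(g) − 1; and for every s ∈ S with φ(s) < 0 one has ℓ(sg) = ℓ(g) + 1 and ℓ(gs) = ℓ(g) + 1. -/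
/-- Let `φ` be a bounded weight function on a Coxeter system `(W, S)` and let `g` attain the
bound (that is, `φ h ≤ φ g` for all `h ∈ W`, so `g ∈ Γ_{W,S}(φ)`). Then for every `s ∈ S` with
`φ s > 0` we have `ℓ(sg) = ℓ(g) - 1` and `ℓ(gs) = ℓ(g) - 1`, and for every `s ∈ S` with
`φ s < 0` we have `ℓ(sg) = ℓ(g) + 1` and `ℓ(gs) = ℓ(g) + 1`. -/
theorem cell_element_descents {B W : Type*} [Group W] {M : CoxeterMatrix B}
    (cs : CoxeterSystem M W) (φ : W → ℝ)
    (hφ : ∀ x y : W, cs.length (x * y) = cs.length x + cs.length y →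
      φ (x * y) = φ x + φ y)
    (g : W) (hg : ∀ h : W, φ h ≤ φ g) :
    ∀ i : B,
      (0 < φ (cs.simple i) →
        cs.length (cs.simple i * g) + 1 = cs.length g ∧
        cs.length (g * cs.simple i) + 1 = cs.length g) ∧
      (φ (cs.simple i) < 0 →
        cs.length (cs.simple i * g) = cs.length g + 1 ∧
        cs.length (g * cs.simple i) = cs.length g + 1) := by
  intro i
  constructor
  · intro hpos
    constructor
    · rcases cs.length_simple_mul g i with h | h
      · exfalso
        have hadd : φ (cs.simple i * g) = φ (cs.simple i) + φ g :=
          hφ _ _ (by rw [h, cs.length_simple]; try omega)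
        have := hg (cs.simple i * g)
        rw [hadd] at this
        linarith
      · exact h
    · rcases cs.length_mul_simple g i with h | h
      · exfalso
        have hadd : φ (g * cs.simple i) = φ g + φ (cs.simple i) :=
          hφ _ _ (by rw [h, cs.length_simple]; try omega)
        have := hg (g * cs.simple i)
        rw [hadd] at this
        linarith
      · exact h
  · intro hneg
    constructor
    · rcases cs.length_simple_mul g i with h | h
      · exact h
      · exfalso
        have hadd : φ (cs.simple i * (cs.simple i * g))
            = φ (cs.simple i) + φ (cs.simple i * g) := by
          apply hφ
          rw [← mul_assoc, cs.simple_mul_simple_self, one_mul, cs.length_simple, ← h]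
          omega
        rw [← mul_assoc, cs.simple_mul_simple_self, one_mul] at hadd
        have := hg (cs.simple i * g)
        linarith
    · rcases cs.length_mul_simple g i with h | h
      · exact h
      · exfalso
        have hadd : φ ((g * cs.simple i) * cs.simple i)
            = φ (g * cs.simple i) + φ (cs.simple i) := by
          apply hφ
          rw [mul_assoc, cs.simple_mul_simple_self, mul_one, cs.length_simple, ← h]
        rw [mul_assoc, cs.simple_mul_simple_self, mul_one] at hadd
        have := hg (g * cs.simple i)
        linarith
end

section
/- Let W̃ = P ⋊ W₀ be an extended affine Weyl group with translation part t_λ for λ in the coweight lattice P, and let φ be a weight function on W̃. If φ is bounded, then ⟨λ, ρ(φ)⟩ ≤ 0 for every dominant coweight λ ∈ P⁺, where ρ(φ) = (1/2)∑_{α∈Φ⁺} φ(α)α. -/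
open RealInnerProductSpace

/-- Let `W̃ = P ⋊ W₀` be an extended affine Weyl group, with translations `t λ` for `λ` in the
coweight lattice, `Φ⁺` the positive roots and `φ(α)` the weight attached to the root `α`, so
that `ρ(φ) = (1/2) ∑_{α ∈ Φ⁺} φ(α) α` and `φ(t λ) = ⟨λ, 2 ρ(φ)⟩` for dominant `λ ∈ P⁺`
(with `P⁺` closed under addition and containing `0`). If the weight function `φ` on `W̃` is
bounded, then `⟨λ, ρ(φ)⟩ ≤ 0` for every dominant coweight `λ ∈ P⁺`. -/
theorem affine_bounded_imp_rho_nonpos {Wt V : Type*} [Group Wt]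
    [NormedAddCommGroup V] [InnerProductSpace ℝ V]
    (Φplus : Finset V) (φα : V → ℝ)
    (Pplus : AddSubmonoid V)
    (t : V → Wt) (ht : ∀ lam mu : V, t (lam + mu) = t lam * t mu)
    (φ : Wt → ℝ)
    (hφt : ∀ lam ∈ Pplus, φ (t lam) = ⟪lam, ∑ a ∈ Φplus, φα a • a⟫)
    (hb : ∃ N : ℝ, ∀ w : Wt, φ w ≤ N) :
    ∀ lam ∈ Pplus, ⟪lam, (1 / 2 : ℝ) • ∑ a ∈ Φplus, φα a • a⟫ ≤ 0 := by
  intro lam hlam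
  obtain ⟨N, hN⟩ := hb
  set S := ∑ a ∈ Φplus, φα a • a with hS
  have key : ∀ n : ℕ, (n : ℝ) * ⟪lam, S⟫ ≤ N := by
    intro n
    have hmem : (n : ℕ) • lam ∈ Pplus := nsmul_mem hlam n
    have := hφt _ hmem
    have hinner : ⟪(n : ℕ) • lam, S⟫ = (n : ℝ) * ⟪lam, S⟫ := by
      rw [← Nat.cast_smul_eq_nsmul ℝ, real_inner_smul_left]
    calc (n : ℝ) * ⟪lam, S⟫ = φ (t ((n : ℕ) • lam)) := by rw [this, hinner]
      _ ≤ N := hN _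
  have hc : ⟪lam, S⟫ ≤ 0 := by
    by_contra h
    push_neg at h
    obtain ⟨n, hn⟩ := exists_nat_gt (N / ⟪lam, S⟫)
    have h1 : N < (n : ℝ) * ⟪lam, S⟫ := by
      calc N = N / ⟪lam, S⟫ * ⟪lam, S⟫ := (div_mul_cancel₀ _ (ne_of_gt h)).symm
        _ < (n : ℝ) * ⟪lam, S⟫ := mul_lt_mul_of_pos_right hn h
    exact absurd (key n) (not_le.mpr h1)
  rw [inner_smul_right]
  nlinarith
end

section
/- Let W̃ = P ⋊ W₀ be an extended affine Weyl group and suppose each w ∈ W̃ decomposes uniquely as w = x t_λ y with x ∈ W₀, λ ∈ P⁺, y ∈ B₀, with ℓ(w) = ℓ(x) + ℓ(t_λ) + ℓ(y). If φ is a weight function with ⟨λ, ρ(φ)⟩ ≤ 0 for all λ ∈ P⁺, then φ is bounded and sup_w φ(w) = max_{x∈W₀} φ(x) + max_{y∈B₀} φ(y). -/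
open RealInnerProductSpace

/-- Let `W̃ = P ⋊ W₀` be an extended affine Weyl group in which every `w ∈ W̃` decomposes
uniquely as `w = x t_λ y` with `x ∈ W₀`, `λ ∈ P⁺`, `y ∈ B₀`, with lengths adding, so that
`φ(x t_λ y) = φ(x) + ⟨λ, 2ρ(φ)⟩ + φ(y)` where `ρ(φ) = (1/2) ∑_{α ∈ Φ⁺} φ(α) α`. If `φ` is a
weight function with `⟨λ, ρ(φ)⟩ ≤ 0` for all `λ ∈ P⁺`, then `φ` is bounded and
`sup_w φ(w) = max_{x ∈ W₀} φ(x) + max_{y ∈ B₀} φ(y)` (attained). -/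
theorem affine_bound_formula {Wt V : Type*} [Group Wt]
    [NormedAddCommGroup V] [InnerProductSpace ℝ V]
    (Φplus : Finset V) (φα : V → ℝ)
    (Pplus : AddSubmonoid V)
    (t : V → Wt)
    (W₀ B₀ : Finset Wt) (hW₀ : W₀.Nonempty) (hB₀ : B₀.Nonempty)
    (φ : Wt → ℝ)
    (hdecomp : ∀ w : Wt, ∃! xly : Wt × V × Wt,
      xly.1 ∈ W₀ ∧ xly.2.1 ∈ Pplus ∧ xly.2.2 ∈ B₀ ∧ w = xly.1 * t xly.2.1 * xly.2.2)
    (hφ : ∀ x ∈ W₀, ∀ lam ∈ Pplus, ∀ y ∈ B₀,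
      φ (x * t lam * y) = φ x + ⟪lam, ∑ a ∈ Φplus, φα a • a⟫ + φ y)
    (hneg : ∀ lam ∈ Pplus, ⟪lam, (1 / 2 : ℝ) • ∑ a ∈ Φplus, φα a • a⟫ ≤ 0) :
    (∃ N : ℝ, ∀ w : Wt, φ w ≤ N) ∧
      IsGreatest (Set.range φ) (W₀.sup' hW₀ φ + B₀.sup' hB₀ φ) := by
  have hneg' : ∀ lam ∈ Pplus, ⟪lam, ∑ a ∈ Φplus, φα a • a⟫ ≤ 0 := by
    intro lam hlam
    have h := hneg lam hlam
    rw [real_inner_smul_right] at h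
    linarith
  have hub : ∀ w : Wt, φ w ≤ W₀.sup' hW₀ φ + B₀.sup' hB₀ φ := by
    intro w
    obtain ⟨⟨x, lam, y⟩, ⟨hx, hlam, hy, hw⟩, -⟩ := hdecomp w
    rw [hw, hφ x hx lam hlam y hy]
    have h1 := Finset.le_sup' φ hx
    have h2 := Finset.le_sup' φ hy
    have h3 := hneg' lam hlam
    linarith
  refine ⟨⟨_, hub⟩, ?_, ?_⟩
  · obtain ⟨x, hx, hxeq⟩ := Finset.exists_mem_eq_sup' hW₀ φ
    obtain ⟨y, hy, hyeq⟩ := Finset.exists_mem_eq_sup' hB₀ φ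
    refine ⟨x * t 0 * y, ?_⟩
    rw [hφ x hx 0 Pplus.zero_mem y hy, inner_zero_left, hxeq, hyeq]
    ring
  · rintro r ⟨w, rfl⟩
    exact hub w
end
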